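/- Let n be a nonzero real number and define K on the open set U = {(x, y) ∈ ℝ² : |y| < x} by K(x, y) = sgn(n)·xⁿ/(x² − y²)ⁿ. Then at every point of U, −∂K/∂x > |∂K/∂y|; explicitly, ∂K/∂x = −|n|·x^{n−1}(x² + y²)/(x² − y²)^{n+1} and ∂K/∂y = 2|n|·y·xⁿ/(x² − y²)^{n+1}. -/

import Mathlib

/-!
On `U = {|y| < x}` we have `K = sgn(n) · hⁿ` with `h = x / (x² - y²)`, half the mean curvature.
By the chain rule `∇K = |n| h^(n-1) ∇h`, and `∇h = (-(x² + y²), 2xy) / (x² - y²)²`, so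
parabolicity reduces to `2x|y| < x² + y²`, i.e. `(x - |y|)² > 0`.
-/

/-- Partial derivative with respect to the first variable. -/
noncomputable def pdx (f : ℝ × ℝ → ℝ) (p : ℝ × ℝ) : ℝ := fderiv ℝ f p (1, 0)

/-- Partial derivative with respect to the second variable. -/
noncomputable def pdy (f : ℝ × ℝ → ℝ) (p : ℝ × ℝ) : ℝ := fderiv ℝ f p (0, 1)

open ContinuousLinearMap Filter Topology

theorem Real.sign_mul_self_eq_abs (r : ℝ) : Real.sign r * r = |r| := by
  rcases lt_trichotomy r 0 with hr | rfl | hr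
  · rw [Real.sign_of_neg hr, abs_of_neg hr, neg_one_mul]
  · simp
  · rw [Real.sign_of_pos hr, abs_of_pos hr, one_mul]

theorem HasFDerivAt.div {𝕜 E : Type*} [NontriviallyNormedField 𝕜] [NormedAddCommGroup E]
    [NormedSpace 𝕜 E] {c d : E → 𝕜} {c' d' : E →L[𝕜] 𝕜} {x : E}
    (hc : HasFDerivAt c c' x) (hd : HasFDerivAt d d' x) (hx : d x ≠ 0) :
    HasFDerivAt (fun y => c y / d y) ((d x ^ 2)⁻¹ • (d x • c' - c x • d')) x := by
  simp only [div_eq_mul_inv]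
  refine (hc.mul ((hasDerivAt_inv hx).comp_hasFDerivAt x hd)).congr_fderiv ?_
  ext v
  simp only [Function.comp_apply, add_apply, smul_apply, smul_eq_mul, neg_mul, mul_neg, sub_apply]
  field_simp
  ring

theorem sq_sub_sq_pos_of_abs_lt {x y : ℝ} (h : |y| < x) : 0 < x ^ 2 - y ^ 2 :=
  sub_pos.2 (sq_lt_sq' (neg_lt_of_abs_lt h) (lt_of_abs_lt h))

theorem abs_two_mul_mul_lt_sq_add_sq {x y : ℝ} (h : |y| < x) : |2 * x * y| < x ^ 2 + y ^ 2 := by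
  have hx : 0 < x := (abs_nonneg y).trans_lt h
  rw [abs_mul, abs_of_pos (by positivity : 0 < 2 * x)]
  nlinarith [sq_abs y, pow_pos (sub_pos.2 h) 2]

theorem hasFDerivAt_fst_div_sq_sub_sq {x y : ℝ} (hD : x ^ 2 - y ^ 2 ≠ 0) :
    HasFDerivAt (fun q : ℝ × ℝ => q.1 / (q.1 ^ 2 - q.2 ^ 2))
      ((-(x ^ 2 + y ^ 2) / (x ^ 2 - y ^ 2) ^ 2) • fst ℝ ℝ ℝ
        + (2 * x * y / (x ^ 2 - y ^ 2) ^ 2) • snd ℝ ℝ ℝ) (x, y) := by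
  have hfst := hasFDerivAt_fst (𝕜 := ℝ) (p := (x, y))
  have hsnd := hasFDerivAt_snd (𝕜 := ℝ) (p := (x, y))
  refine (hfst.div ((hfst.pow 2).sub (hsnd.pow 2)) hD).congr_fderiv (ext fun v => ?_)
  simp only [Pi.sub_apply, Nat.add_one_sub_one, pow_one, nsmul_eq_mul, Nat.cast_ofNat, smul_apply,
    sub_apply, coe_fst', smul_eq_mul, coe_snd', neg_add_rev, add_apply]
  field_simp
  ring

theorem div_rpow_sub_one_div_sq {x D : ℝ} (hx : 0 ≤ x) (hD : 0 < D) (n : ℝ) :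
    (x / D) ^ (n - 1) / D ^ 2 = x ^ (n - 1) / D ^ (n + 1) := by
  rw [Real.div_rpow hx hD.le, div_div, show n + 1 = n - 1 + 2 by ring, Real.rpow_add hD,
    Real.rpow_two]

theorem const_mul_rpow_div_rpow_eventuallyEq {x y : ℝ} (h : |y| < x) (c n : ℝ) :
    (fun q : ℝ × ℝ => c * q.1 ^ n / (q.1 ^ 2 - q.2 ^ 2) ^ n) =ᶠ[𝓝 (x, y)]
      fun q => c * (q.1 / (q.1 ^ 2 - q.2 ^ 2)) ^ n := by
  filter_upwards [(isOpen_lt continuous_snd.abs continuous_fst).mem_nhds h] with q hq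
  rw [mul_div_assoc,
    Real.div_rpow ((abs_nonneg _).trans hq.le) (sq_sub_sq_pos_of_abs_lt hq).le n]

theorem powers_of_mean_curvature_parabolic (n : ℝ) (hn : n ≠ 0)
    (K : ℝ × ℝ → ℝ)
    (hK : K = fun q : ℝ × ℝ => Real.sign n * q.1 ^ n / (q.1 ^ 2 - q.2 ^ 2) ^ n) :
    ∀ p : ℝ × ℝ, |p.2| < p.1 →
      pdx K p = -(|n| * p.1 ^ (n - 1) * (p.1 ^ 2 + p.2 ^ 2) /
                  (p.1 ^ 2 - p.2 ^ 2) ^ (n + 1)) ∧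
      pdy K p = 2 * |n| * p.2 * p.1 ^ n / (p.1 ^ 2 - p.2 ^ 2) ^ (n + 1) ∧
      |pdy K p| < -pdx K p := by
  rintro ⟨x, y⟩ (h : |y| < x)
  have hx : 0 < x := (abs_nonneg y).trans_lt h
  have hD := sq_sub_sq_pos_of_abs_lt h
  have hKderiv := (((hasFDerivAt_fst_div_sq_sub_sq hD.ne').rpow_const
    (Or.inl (div_pos hx hD).ne')).const_mul (Real.sign n)).congr_of_eventuallyEq
    (hK ▸ const_mul_rpow_div_rpow_eventuallyEq h (Real.sign n) n)
  set c := |n| * (x / (x ^ 2 - y ^ 2)) ^ (n - 1) with hc_def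
  have hc : 0 < c := mul_pos (abs_pos.2 hn) (Real.rpow_pos_of_pos (div_pos hx hD) _)
  have hpdx : pdx K (x, y) = -(c * (x ^ 2 + y ^ 2) / (x ^ 2 - y ^ 2) ^ 2) := by
    simp only [pdx, hKderiv.fderiv, smul_apply, add_apply, coe_fst', coe_snd', smul_eq_mul, hc_def,
      ← Real.sign_mul_self_eq_abs]
    ring
  have hpdy : pdy K (x, y) = c * (2 * x * y) / (x ^ 2 - y ^ 2) ^ 2 := by
    simp only [pdy, hKderiv.fderiv, smul_apply, add_apply, coe_fst', coe_snd', smul_eq_mul, hc_def,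
      ← Real.sign_mul_self_eq_abs]
    ring
  have hpow := div_rpow_sub_one_div_sq hx.le hD n
  refine ⟨?_, ?_, ?_⟩
  · rw [hpdx, mul_div_right_comm, hc_def, mul_div_assoc, hpow]
    ring
  · rw [hpdy, mul_div_right_comm, hc_def, mul_div_assoc, hpow, Real.rpow_sub_one hx.ne']
    field_simp
  · rw [hpdx, hpdy, neg_neg, abs_div, abs_of_pos (pow_pos hD 2), abs_mul, abs_of_pos hc]
    gcongr
    exact abs_two_mul_mul_lt_sq_add_sq h
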